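/- arXiv:1804.10863 — 2 statements merged into one kernel-verified Lean document; each statement's English description precedes it below -/
import Mathlib

section
/- There exists a constant C > 0 such that for every ζ ∈ [−N, 0) and every k ∈ ℂ ∖ [−k₀, k₀] with |k + k₀| ≥ k₀/2, one has |χ(ζ,k)| ≤ C. (This is the paper's Lemma 3.1: χ(ζ,·) is uniformly bounded, with respect to ζ ∈ I, on the complement of the disk of radius k₀/2 around −k₀.) -/
open Set MeasureTheory

noncomputable section

def k0 (ζ : ℝ) : ℝ := Real.sqrt (-ζ / 12)

def chi (L : ℝ → ℂ) (ζ : ℝ) (k : ℂ) : ℂ :=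
  (2 * Real.pi * Complex.I)⁻¹ *
    ∫ s in (-(k0 ζ))..(k0 ζ), (L s - L (k0 ζ)) / ((s : ℂ) - k)

/-!
A `C¹` function `L` is Lipschitz, with some constant `M`, on `[-K₀, K₀]`. Let `σ` be the point of
`[-k₀, k₀]` nearest to `Re k`. Then `|L s - L σ| ≤ M |s - σ| ≤ M |s - k|`, so subtracting `L σ`
leaves an integrand bounded by `M`, and what remains is `(L σ - L k₀) ∫ ds / (s - k)`. The integral
is `log (k₀ - k) - log (-k₀ - k)` up to a branch, of size `|log |k - k₀| - log |k + k₀|| + 2π`,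
while `|L σ - L k₀| ≤ M (k₀ - σ) ≤ M min(|k - k₀|, 2k₀)`. Since `|k + k₀| ≥ k₀/2`, the product
is `O(M k₀)`, uniformly in `ζ` because `k₀ ≤ K₀`.
-/

open Complex NNReal

theorem Complex.norm_log_sub_log_le (z w : ℂ) :
    ‖log z - log w‖ ≤ |Real.log ‖z‖ - Real.log ‖w‖| + 2 * Real.pi := by
  have harg : |z.arg - w.arg| ≤ 2 * Real.pi := by
    have hz := abs_le.1 (abs_arg_le_pi z)
    have hw := abs_le.1 (abs_arg_le_pi w)
    exact abs_le.2 ⟨by linarith, by linarith⟩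
  calc ‖log z - log w‖ ≤ |(log z - log w).re| + |(log z - log w).im| :=
        norm_le_abs_re_add_abs_im _
    _ = |Real.log ‖z‖ - Real.log ‖w‖| + |z.arg - w.arg| := by simp [log_re, log_im]
    _ ≤ _ := by linarith

theorem integral_inv_ofReal_sub_of_mem_slitPlane {a b : ℝ} {k : ℂ}
    (hk : ∀ s ∈ uIcc a b, (s : ℂ) - k ∈ slitPlane) :
    ∫ s in a..b, ((s : ℂ) - k)⁻¹ = log (b - k) - log (a - k) := by
  refine intervalIntegral.integral_eq_sub_of_hasDerivAt
    (f := fun s : ℝ => log ((s : ℂ) - k)) (fun s hs => ?_) ?_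
  · simpa [one_div] using
      (((hasDerivAt_id s).ofReal_comp).sub_const k).clog_real (hk s hs)
  · exact (ContinuousOn.inv₀ (by fun_prop) fun s hs =>
      slitPlane_ne_zero (hk s hs)).intervalIntegrable

theorem ofReal_sub_mem_slitPlane_of_re_nonpos {a s : ℝ} {k : ℂ}
    (hk : k ∉ ofReal '' Icc (-a) a) (hre : k.re ≤ 0) (hs : s ∈ Icc (-a) a) :
    (s : ℂ) - k ∈ slitPlane := by
  rw [mem_slitPlane_iff]
  by_cases him : k.im = 0
  · have hout : k.re ∉ Icc (-a) a := fun h => hk ⟨k.re, h, ext rfl (by simp [him])⟩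
    left
    simp only [sub_re, ofReal_re, sub_pos]
    by_contra! h
    exact hout ⟨by linarith [hs.1], by linarith [hs.1, hs.2]⟩
  · right
    simpa using him

theorem integral_inv_ofReal_sub_eq_neg (a : ℝ) (k : ℂ) :
    ∫ s in (-a)..a, ((s : ℂ) - k)⁻¹ = -∫ s in (-a)..a, ((s : ℂ) - -k)⁻¹ := by
  have := intervalIntegral.integral_comp_neg (a := -a) (b := a) (fun s : ℝ => ((s : ℂ) - -k)⁻¹)
  rw [neg_neg] at this
  rw [← this, ← intervalIntegral.integral_neg]
  congr 1 with s
  push_cast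
  rw [← inv_neg]; ring_nf

theorem norm_integral_inv_ofReal_sub_le {a : ℝ} (ha : 0 ≤ a) {k : ℂ}
    (hk : k ∉ ofReal '' Icc (-a) a) :
    ‖∫ s in (-a)..a, ((s : ℂ) - k)⁻¹‖ ≤
      |Real.log ‖k - a‖ - Real.log ‖k + a‖| + 2 * Real.pi := by
  -- `s ↦ -s` trades `k` for `-k`; for `Re k ≤ 0` the segment minus `k` avoids the branch cut
  wlog hre : k.re ≤ 0 generalizing k
  · have hk' : -k ∉ ofReal '' Icc (-a) a := by
      rintro ⟨s, hs, hsk⟩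
      exact hk ⟨-s, ⟨by linarith [hs.2], by linarith [hs.1]⟩, by push_cast; rw [hsk, neg_neg]⟩
    have := this hk' (by simp only [neg_re]; linarith)
    rw [integral_inv_ofReal_sub_eq_neg, norm_neg, abs_sub_comm, ← norm_neg (k - a),
      ← norm_neg (k + a), neg_sub', neg_add', sub_neg_eq_add]
    exact this
  rw [integral_inv_ofReal_sub_of_mem_slitPlane fun s hs =>
    ofReal_sub_mem_slitPlane_of_re_nonpos hk hre (by rwa [uIcc_of_le (by linarith)] at hs)]
  push_cast
  have := norm_log_sub_log_le (a - k) (-a - k)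
  rwa [← norm_neg ((a : ℂ) - k), ← norm_neg (-(a : ℂ) - k), neg_sub, neg_sub,
    sub_neg_eq_add] at this

theorem mul_abs_log_sub_log_le {a d t u : ℝ} (ha : 0 < a) (ht : 0 < t) (hdt : d ≤ t)
    (hda : d ≤ 2 * a) (hu : a / 2 ≤ u) (htu : |t - u| ≤ 2 * a) :
    d * |Real.log t - Real.log u| ≤ 8 * a := by
  have hu0 : 0 < u := by linarith
  obtain ⟨htu₁, htu₂⟩ := abs_le.1 htu
  rcases le_total t u with h | h
  · rw [abs_sub_comm, abs_of_nonneg (sub_nonneg.2 (Real.log_le_log ht h)),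
      ← Real.log_div hu0.ne' ht.ne']
    calc d * Real.log (u / t) ≤ t * Real.log (u / t) :=
          mul_le_mul_of_nonneg_right hdt (Real.log_nonneg ((one_le_div ht).2 h))
      _ ≤ t * (u / t - 1) :=
          mul_le_mul_of_nonneg_left (Real.log_le_sub_one_of_pos (by positivity)) ht.le
      _ = u - t := by field_simp
      _ ≤ 8 * a := by linarith
  · rw [abs_of_nonneg (sub_nonneg.2 (Real.log_le_log hu0 h)), ← Real.log_div ht.ne' hu0.ne']
    calc d * Real.log (t / u) ≤ 2 * a * Real.log (t / u) :=
          mul_le_mul_of_nonneg_right hda (Real.log_nonneg ((one_le_div hu0).2 h))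
      _ ≤ 2 * a * (t / u - 1) :=
          mul_le_mul_of_nonneg_left (Real.log_le_sub_one_of_pos (by positivity)) (by positivity)
      _ = 2 * a * (t - u) / u := by field_simp
      _ ≤ 2 * a * (2 * a) / (a / 2) := by gcongr
      _ = 8 * a := by field_simp; ring

theorem abs_sub_projIcc_re_le_norm {b c s : ℝ} (h : b ≤ c) (hs : s ∈ Icc b c) (k : ℂ) :
    |s - projIcc b c h k.re| ≤ ‖(s : ℂ) - k‖ :=
  calc |s - projIcc b c h k.re| = |(projIcc b c h s : ℝ) - projIcc b c h k.re| := by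
        rw [projIcc_of_mem h hs]
    _ ≤ |s - k.re| := abs_projIcc_sub_projIcc h
    _ ≤ ‖(s : ℂ) - k‖ := by simpa using Complex.abs_re_le_norm ((s : ℂ) - k)

theorem norm_integral_sub_projIcc_div_le {L : ℝ → ℂ} {M : ℝ≥0} {b c : ℝ} (h : b ≤ c)
    (hL : LipschitzOnWith M L (Icc b c)) (k : ℂ) :
    ‖∫ s in b..c, (L s - L (projIcc b c h k.re)) / ((s : ℂ) - k)‖ ≤ M * (c - b) := by
  rw [← abs_of_nonneg (sub_nonneg.2 h)]
  refine intervalIntegral.norm_integral_le_of_norm_le_const fun s hs => ?_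
  have hs : s ∈ Icc b c := Ioc_subset_Icc_self (by rwa [uIoc_of_le h] at hs)
  rw [norm_div]
  refine div_le_of_le_mul₀ (norm_nonneg _) M.2 ?_
  calc ‖L s - L (projIcc b c h k.re)‖ ≤ M * |s - projIcc b c h k.re| := by
        simpa [dist_eq_norm, Real.dist_eq] using hL.dist_le_mul s hs _ (Subtype.prop _)
    _ ≤ M * ‖(s : ℂ) - k‖ := by gcongr; exact abs_sub_projIcc_re_le_norm h hs k

theorem integral_sub_div_ofReal_sub_eq {L : ℝ → ℂ} {a b : ℝ} {k : ℂ}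
    (hL : ContinuousOn L (uIcc a b)) (hk : ∀ s ∈ uIcc a b, (s : ℂ) - k ≠ 0) (c d : ℂ) :
    ∫ s in a..b, (L s - d) / ((s : ℂ) - k) =
      (∫ s in a..b, (L s - c) / ((s : ℂ) - k)) + (c - d) * ∫ s in a..b, ((s : ℂ) - k)⁻¹ := by
  have h₁ : IntervalIntegrable (fun s : ℝ => (L s - c) / ((s : ℂ) - k)) volume a b :=
    ((hL.sub continuousOn_const).div (by fun_prop) hk).intervalIntegrable
  have h₂ : IntervalIntegrable (fun s : ℝ => (c - d) * ((s : ℂ) - k)⁻¹) volume a b :=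
    (ContinuousOn.inv₀ (by fun_prop) hk).intervalIntegrable.const_mul _
  rw [← intervalIntegral.integral_const_mul, ← intervalIntegral.integral_add h₁ h₂]
  congr 1 with s
  ring

theorem norm_integral_sub_div_ofReal_sub_le {L : ℝ → ℂ} {M : ℝ≥0} {a : ℝ} (ha : 0 < a)
    (hL : LipschitzOnWith M L (Icc (-a) a)) {k : ℂ} (hk : k ∉ ofReal '' Icc (-a) a)
    (hfar : a / 2 ≤ ‖k + a‖) :
    ‖∫ s in (-a)..a, (L s - L a) / ((s : ℂ) - k)‖ ≤ 26 * M * a := by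
  have haa : -a ≤ a := by linarith
  set σ : ℝ := ↑(projIcc (-a) a haa k.re)
  have hσ : σ ∈ Icc (-a) a := Subtype.prop _
  have hden : ∀ s ∈ uIcc (-a) a, (s : ℂ) - k ≠ 0 := fun s hs h =>
    hk ⟨s, by rwa [uIcc_of_le haa] at hs, sub_eq_zero.1 h⟩
  have hLc : ContinuousOn L (uIcc (-a) a) := by
    rw [uIcc_of_le haa]; exact hL.continuousOn
  have hLσ : ‖L σ - L a‖ ≤ M * (a - σ) := by
    have := hL.dist_le_mul σ hσ a ⟨haa, le_rfl⟩
    rwa [dist_eq_norm, Real.dist_eq, abs_sub_comm, abs_of_nonneg (sub_nonneg.2 hσ.2)] at this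
  have hlog : (a - σ) * |Real.log ‖k - a‖ - Real.log ‖k + a‖| ≤ 8 * a := by
    refine mul_abs_log_sub_log_le ha (norm_pos_iff.2 (sub_ne_zero.2 fun h => ?_)) ?_
      (by linarith [hσ.1]) hfar ?_
    · exact hk ⟨a, ⟨haa, le_rfl⟩, h.symm⟩
    · simpa [norm_sub_rev] using
        (le_abs_self _).trans (abs_sub_projIcc_re_le_norm haa ⟨haa, le_rfl⟩ k)
    · calc |‖k - a‖ - ‖k + a‖| ≤ ‖k - a - (k + a)‖ := abs_norm_sub_norm_le _ _
        _ = 2 * a := by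
          rw [show k - a - (k + a) = -((2 * a : ℝ) : ℂ) by push_cast; ring, norm_neg,
            norm_real, Real.norm_of_nonneg (by linarith)]
  calc ‖∫ s in (-a)..a, (L s - L a) / ((s : ℂ) - k)‖
      ≤ ‖∫ s in (-a)..a, (L s - L σ) / ((s : ℂ) - k)‖ +
          ‖L σ - L a‖ * ‖∫ s in (-a)..a, ((s : ℂ) - k)⁻¹‖ := by
        rw [integral_sub_div_ofReal_sub_eq hLc hden (L σ), ← norm_mul]
        exact norm_add_le _ _
    _ ≤ M * (a - -a) +
          M * (a - σ) * (|Real.log ‖k - a‖ - Real.log ‖k + a‖| + 2 * Real.pi) := by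
        refine add_le_add (norm_integral_sub_projIcc_div_le haa hL k) (mul_le_mul hLσ
          (norm_integral_inv_ofReal_sub_le ha.le hk) (norm_nonneg _) ?_)
        exact mul_nonneg M.2 (sub_nonneg.2 hσ.2)
    _ ≤ 26 * M * a := by
        have hσa : (M : ℝ) * (a - σ) ≤ M * (2 * a) :=
          mul_le_mul_of_nonneg_left (by linarith [hσ.1]) M.2
        have hpi : (M : ℝ) * (a - σ) * (2 * Real.pi) ≤ M * (2 * a) * 8 :=
          mul_le_mul hσa (by linarith [Real.pi_le_four]) (by positivity) (by positivity)
        nlinarith [mul_le_mul_of_nonneg_left hlog M.2]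

theorem norm_chi_le (L : ℝ → ℂ) (ζ : ℝ) (k : ℂ) :
    ‖chi L ζ k‖ ≤ ‖∫ s in (-(k0 ζ))..(k0 ζ), (L s - L (k0 ζ)) / ((s : ℂ) - k)‖ := by
  have hnorm : ‖2 * (Real.pi : ℂ) * Complex.I‖ = 2 * Real.pi := by
    simp [abs_of_pos Real.pi_pos]
  rw [chi, norm_mul, norm_inv, hnorm]
  exact mul_le_of_le_one_left (norm_nonneg _)
    (inv_le_one_of_one_le₀ (by linarith [Real.pi_gt_three]))

theorem chi_uniformly_bounded_general (N : ℝ) (L : ℝ → ℂ)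
    (hL : ContDiffOn ℝ 1 L (Icc (-Real.sqrt (N / 12)) (Real.sqrt (N / 12)))) :
    ∃ C : ℝ, 0 < C ∧ ∀ ζ ∈ Ico (-N) (0 : ℝ), ∀ k : ℂ,
      k ∉ (fun s : ℝ => (s : ℂ)) '' Icc (-(k0 ζ)) (k0 ζ) →
      k0 ζ / 2 ≤ ‖k + (k0 ζ : ℂ)‖ →
      ‖chi L ζ k‖ ≤ C := by
  obtain ⟨M, hM⟩ := hL.exists_lipschitzOnWith one_ne_zero (convex_Icc _ _) isCompact_Icc
  refine ⟨26 * M * Real.sqrt (N / 12) + 1, by positivity, fun ζ ⟨hNζ, hζ0⟩ k hk hfar => ?_⟩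
  have ha : 0 < k0 ζ := Real.sqrt_pos.2 (by linarith)
  have haK : k0 ζ ≤ Real.sqrt (N / 12) := Real.sqrt_le_sqrt (by linarith)
  calc ‖chi L ζ k‖ ≤ ‖∫ s in (-(k0 ζ))..(k0 ζ), (L s - L (k0 ζ)) / ((s : ℂ) - k)‖ :=
        norm_chi_le L ζ k
    _ ≤ 26 * M * k0 ζ :=
        norm_integral_sub_div_ofReal_sub_le ha (hM.mono (Icc_subset_Icc (by linarith) haK)) hk hfar
    _ ≤ 26 * M * Real.sqrt (N / 12) + 1 := le_add_of_le_of_nonneg (by gcongr) zero_le_one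

/-- Lemma 3.1: χ(ζ,·) is uniformly bounded, w.r.t. ζ ∈ I = [-N,0), on the
complement of the disk of radius k₀/2 around -k₀ (and off the segment [-k₀,k₀]). -/
theorem chi_uniformly_bounded (N : ℝ) (hN : 0 < N) (L : ℝ → ℂ)
    (hL : ContDiffOn ℝ 1 L (Icc (-Real.sqrt (N / 12)) (Real.sqrt (N / 12))))
    (hsym : ∀ s ∈ Icc (-Real.sqrt (N / 12)) (Real.sqrt (N / 12)),
      L (-s) = starRingEnd ℂ (L s)) :
    ∃ C : ℝ, 0 < C ∧ ∀ ζ ∈ Ico (-N) (0 : ℝ), ∀ k : ℂ,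
      k ∉ (fun s : ℝ => (s : ℂ)) '' Icc (-(k0 ζ)) (k0 ζ) →
      k0 ζ / 2 ≤ ‖k + (k0 ζ : ℂ)‖ →
      ‖chi L ζ k‖ ≤ C :=
  chi_uniformly_bounded_general N L hL
end
end

section
/- Let x, t ∈ ℝ, k ∈ ℂ, let v₁, v₂ ∈ ℂ² and a₁, a₂, b ∈ ℂ with a₁ ≠ 0, a₂ ≠ 0 and a₁a₂ − b² = 1. Set w₁ := a₁v₁ + b v₂ and w₂ := b v₁ + a₂ v₂, put θ := ikx + 4ik³t and E := e^{θ}, and define the 2×2 matrices M₊ := (w₁/a₁ | v₂)·diag(E, E⁻¹) and M₋ := (v₁ | w₂/a₂)·diag(E, E⁻¹) (columns as indicated). Then M₊ = M₋ J, where J := diag(E⁻¹, E) · [[1 − r₁r₂, −r₂],[r₁, 1]] · diag(E, E⁻¹) with r₁ := b/a₁ and r₂ := b/a₂. (This is the jump relation (2.15) with jump matrix (2.18) for the Riemann–Hilbert problem associated with the nonlocal mKdV equation, derived from the scattering relation Φ₁ = Φ₂S.) -/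
/-!
Conjugating by `diag(E, E⁻¹)` cancels against the factor `diag(E, E⁻¹)` of `M₋`, so the jump
relation reduces to the `E`-free identity `(w₁/a₁ | v₂) = (v₁ | w₂/a₂) · [[1 - r₁r₂, -r₂], [r₁, 1]]`,
which is checked column by column from `w₁ = a₁v₁ + bv₂` and `w₂ = bv₁ + a₂v₂`.
-/

open Matrix

noncomputable section

/-- The 2×2 matrix with columns `u` and `v`. -/
def colMat (u v : Fin 2 → ℂ) : Matrix (Fin 2) (Fin 2) ℂ :=
  Matrix.of fun i j => ![u i, v i] j

theorem colMat_mul (u v : Fin 2 → ℂ) (A : Matrix (Fin 2) (Fin 2) ℂ) :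
    colMat u v * A = colMat (A 0 0 • u + A 1 0 • v) (A 0 1 • u + A 1 1 • v) := by
  ext i j
  fin_cases j <;> simp [colMat, mul_apply, Fin.sum_univ_two, mul_comm]

/-- As `0⁻¹ = 0`, the identity `E * E⁻¹ * E = E` behind this holds for every `E`. -/
theorem diag_mul_conj_diag (E : ℂ) (A : Matrix (Fin 2) (Fin 2) ℂ) :
    !![E, 0; 0, E⁻¹] * (!![E⁻¹, 0; 0, E] * A * !![E, 0; 0, E⁻¹]) = A * !![E, 0; 0, E⁻¹] := by
  rw [eta_fin_two A]
  simp only [mul_fin_two, mul_zero, zero_mul, add_zero, zero_add]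
  congr 1
  grind

theorem colMat_scattering {a₁ a₂ : ℂ} (ha₁ : a₁ ≠ 0) (ha₂ : a₂ ≠ 0) (b : ℂ) (v₁ v₂ : Fin 2 → ℂ) :
    colMat (a₁⁻¹ • (a₁ • v₁ + b • v₂)) v₂ =
      colMat v₁ (a₂⁻¹ • (b • v₁ + a₂ • v₂)) * !![1 - b / a₁ * (b / a₂), -(b / a₂); b / a₁, 1] := by
  rw [colMat_mul]
  congr 1 <;> ext i <;>
    simp only [of_apply, cons_val_zero, cons_val_one, cons_val_fin_one, Pi.add_apply,
      Pi.smul_apply, smul_eq_mul, neg_mul, one_mul] <;>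
    field_simp <;> ring

theorem jump_relation_general (v₁ v₂ : Fin 2 → ℂ) (a₁ a₂ b : ℂ)
    (ha₁ : a₁ ≠ 0) (ha₂ : a₂ ≠ 0)
    (w₁ w₂ : Fin 2 → ℂ) (hw₁ : w₁ = a₁ • v₁ + b • v₂) (hw₂ : w₂ = b • v₁ + a₂ • v₂)
    (E : ℂ)
    (r₁ r₂ : ℂ) (hr₁ : r₁ = b / a₁) (hr₂ : r₂ = b / a₂)
    (Mp Mm J : Matrix (Fin 2) (Fin 2) ℂ)
    (hMp : Mp = colMat (a₁⁻¹ • w₁) v₂ * !![E, 0; 0, E⁻¹])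
    (hMm : Mm = colMat v₁ (a₂⁻¹ • w₂) * !![E, 0; 0, E⁻¹])
    (hJ : J = !![E⁻¹, 0; 0, E] * !![1 - r₁ * r₂, -r₂; r₁, 1] * !![E, 0; 0, E⁻¹]) :
    Mp = Mm * J := by
  subst hMp hMm hJ hw₁ hw₂ hr₁ hr₂
  rw [colMat_scattering ha₁ ha₂, Matrix.mul_assoc, Matrix.mul_assoc, diag_mul_conj_diag]

/-- The jump relation (2.15) with jump matrix (2.18), derived from the
scattering relation Φ₁ = Φ₂S with S = [[a₁,b],[b,a₂]], det S = 1. -/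
theorem jump_relation (x t : ℝ) (k : ℂ) (v₁ v₂ : Fin 2 → ℂ) (a₁ a₂ b : ℂ)
    (ha₁ : a₁ ≠ 0) (ha₂ : a₂ ≠ 0) (hdet : a₁ * a₂ - b ^ 2 = 1)
    (w₁ w₂ : Fin 2 → ℂ) (hw₁ : w₁ = a₁ • v₁ + b • v₂) (hw₂ : w₂ = b • v₁ + a₂ • v₂)
    (θ : ℂ) (hθ : θ = Complex.I * k * (x : ℂ) + 4 * Complex.I * k ^ 3 * (t : ℂ))
    (E : ℂ) (hE : E = Complex.exp θ)
    (r₁ r₂ : ℂ) (hr₁ : r₁ = b / a₁) (hr₂ : r₂ = b / a₂)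
    (Mp Mm J : Matrix (Fin 2) (Fin 2) ℂ)
    (hMp : Mp = colMat (a₁⁻¹ • w₁) v₂ * !![E, 0; 0, E⁻¹])
    (hMm : Mm = colMat v₁ (a₂⁻¹ • w₂) * !![E, 0; 0, E⁻¹])
    (hJ : J = !![E⁻¹, 0; 0, E] * !![1 - r₁ * r₂, -r₂; r₁, 1] * !![E, 0; 0, E⁻¹]) :
    Mp = Mm * J :=
  jump_relation_general v₁ v₂ a₁ a₂ b ha₁ ha₂ w₁ w₂ hw₁ hw₂ E r₁ r₂ hr₁ hr₂ Mp Mm J hMp hMm hJ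
end
end
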